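/- Let (A,η) be a contact Lie algebroid of rank 2n+1 over a smooth manifold M with Reeb section ξ, and assume ρ(ξ) = 0 as a vector field on M. For f,g ∈ C^∞(M) define {f,g} := dη(a_f,a_g), where a_f is the Hamiltonian section of f. Then {·,·} is a Poisson bracket on C^∞(M): it is ℝ-bilinear and antisymmetric, satisfies the Leibniz rule {fg,h} = f{g,h} + g{f,h} for all f,g,h ∈ C^∞(M), and satisfies the Jacobi identity {f,{g,h}} + {g,{h,f}} + {h,{f,g}} = 0. -/

import Mathlib

open Bundle
open scoped Manifold

noncomputable section

/-- The directional derivative of a real-valued function on a manifold along a tangent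
vector. (The tangent space of `ℝ` is definitionally `ℝ`.) -/
def dirDeriv {EM : Type*} [NormedAddCommGroup EM] [NormedSpace ℝ EM]
    {HM : Type*} [TopologicalSpace HM] (IM : ModelWithCorners ℝ EM HM)
    {M : Type*} [TopologicalSpace M] [ChartedSpace HM M]
    (f : M → ℝ) (p : M) (v : TangentSpace IM p) : ℝ :=
  mfderiv IM 𝓘(ℝ) f p v

section LieAlgebroid

variable {EM : Type*} [NormedAddCommGroup EM] [NormedSpace ℝ EM]
  {HM : Type*} [TopologicalSpace HM] (IM : ModelWithCorners ℝ EM HM)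
  (M : Type*) [TopologicalSpace M] [ChartedSpace HM M] [IsManifold IM (⊤ : ℕ∞) M]
  (F : Type*) [NormedAddCommGroup F] [NormedSpace ℝ F]
  (A : M → Type*) [∀ p, AddCommGroup (A p)] [∀ p, Module ℝ (A p)]
  [∀ p, TopologicalSpace (A p)] [TopologicalSpace (TotalSpace F A)]
  [FiberBundle F A] [VectorBundle ℝ F A]

/-- A set-theoretic section of the vector bundle `A` is smooth. -/
def IsSmoothSec (S : ∀ p, A p) : Prop :=
  ContMDiff IM (IM.prod 𝓘(ℝ, F)) (⊤ : ℕ∞) (fun p ↦ TotalSpace.mk' F p (S p))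

/-- A vector field on the base manifold is smooth. -/
def IsSmoothVF (X : ∀ p : M, TangentSpace IM p) : Prop :=
  ContMDiff IM IM.tangent (⊤ : ℕ∞)
    (fun p ↦ (TotalSpace.mk' EM p (X p) : TangentBundle IM M))

/-- A real-valued function on the base manifold is smooth. -/
def IsSmoothF (f : M → ℝ) : Prop := ContMDiff IM 𝓘(ℝ) (⊤ : ℕ∞) f

/-- A Lie algebroid structure on the smooth vector bundle `A` over `M`: an `ℝ`-Lie bracket
on smooth sections together with an anchor `ρ : A → TM` which is a morphism to vector
fields (expressed through the induced derivations) and satisfies the Leibniz rule. -/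
structure LieAlgebroid : Type _ where
  bracket : (∀ p, A p) → (∀ p, A p) → (∀ p, A p)
  anchor : ∀ p : M, A p →ₗ[ℝ] TangentSpace IM p
  anchor_smooth : ∀ {S}, IsSmoothSec IM M F A S →
    IsSmoothVF IM M (fun p ↦ anchor p (S p))
  bracket_smooth : ∀ {S T}, IsSmoothSec IM M F A S → IsSmoothSec IM M F A T →
    IsSmoothSec IM M F A (bracket S T)
  bracket_antisymm : ∀ {S T}, IsSmoothSec IM M F A S → IsSmoothSec IM M F A T →
    bracket S T = fun p ↦ -bracket T S p
  bracket_add_left : ∀ {S T U}, IsSmoothSec IM M F A S → IsSmoothSec IM M F A T →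
    IsSmoothSec IM M F A U →
    bracket (fun p ↦ S p + T p) U = fun p ↦ bracket S U p + bracket T U p
  bracket_smul_left : ∀ (r : ℝ) {S T}, IsSmoothSec IM M F A S → IsSmoothSec IM M F A T →
    bracket (fun p ↦ r • S p) T = fun p ↦ r • bracket S T p
  bracket_jacobi : ∀ {S T U}, IsSmoothSec IM M F A S → IsSmoothSec IM M F A T →
    IsSmoothSec IM M F A U → ∀ p,
    bracket S (bracket T U) p + bracket T (bracket U S) p + bracket U (bracket S T) p = 0
  leibniz : ∀ {S T} (f : M → ℝ), IsSmoothSec IM M F A S → IsSmoothSec IM M F A T →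
    IsSmoothF IM M f →
    bracket S (fun p ↦ f p • T p) =
      fun p ↦ f p • bracket S T p + dirDeriv IM f p (anchor p (S p)) • T p
  anchor_bracket : ∀ {S T} (f : M → ℝ), IsSmoothSec IM M F A S → IsSmoothSec IM M F A T →
    IsSmoothF IM M f → ∀ p,
    dirDeriv IM f p (anchor p (bracket S T p)) =
      dirDeriv IM (fun q ↦ dirDeriv IM f q (anchor q (T q))) p (anchor p (S p)) -
      dirDeriv IM (fun q ↦ dirDeriv IM f q (anchor q (S q))) p (anchor p (T p))


/-- Up to a positive normalization constant, the value of the `(2n+1)`-form `η ∧ Ω^n`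
on a tuple of vectors, where `η` is a linear functional and `Ω` a bilinear alternating
form. -/
def contactPairing {V : Type*} [AddCommGroup V] [Module ℝ V] (n : ℕ)
    (η : V →ₗ[ℝ] ℝ) (Ω : V →ₗ[ℝ] V →ₗ[ℝ] ℝ) (v : Fin (2 * n + 1) → V) : ℝ :=
  ∑ σ : Equiv.Perm (Fin (2 * n + 1)),
    (Equiv.Perm.sign σ : ℤ) •
      (η (v (σ ⟨0, by omega⟩)) *
        ∏ i : Fin n,
          Ω (v (σ ⟨2 * i.1 + 1, by have := i.2; omega⟩))
            (v (σ ⟨2 * i.1 + 2, by have := i.2; omega⟩)))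

variable [∀ p : M, FiniteDimensional ℝ (A p)]

/-- A contact structure on the rank-`2n+1` Lie algebroid `(A, ρ, [·,·])`: a smooth
1-form section `η` of `A*`, whose exterior differential is the (tensorial) 2-form `dη`
determined by `dη(S,T) = ρ(S)·η(T) − ρ(T)·η(S) − η([S,T])` on sections, such that
`η ∧ (dη)^n` is nowhere vanishing. -/
structure ContactForm (n : ℕ) (La : LieAlgebroid IM M F A) : Type _ where
  eta : ∀ p : M, A p →ₗ[ℝ] ℝ
  eta_smooth : ∀ {S}, IsSmoothSec IM M F A S → IsSmoothF IM M (fun p ↦ eta p (S p))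
  rank_eq : ∀ p : M, Module.finrank ℝ (A p) = 2 * n + 1
  deta : ∀ p : M, A p →ₗ[ℝ] A p →ₗ[ℝ] ℝ
  deta_alt : ∀ (p : M) (v : A p), deta p v v = 0
  deta_eq : ∀ {S T}, IsSmoothSec IM M F A S → IsSmoothSec IM M F A T → ∀ p : M,
    deta p (S p) (T p) =
      dirDeriv IM (fun q ↦ eta q (T q)) p (La.anchor p (S p)) -
        dirDeriv IM (fun q ↦ eta q (S q)) p (La.anchor p (T p)) -
        eta p (La.bracket S T p)
  contact : ∀ p : M, ∃ v : Fin (2 * n + 1) → A p,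
    contactPairing n (eta p) (deta p) v ≠ 0

/-- `ξ` is the Reeb section of the contact Lie algebroid: `η(ξ) = 1`, `i_ξ dη = 0`. -/
def IsReebSec (n : ℕ) (La : LieAlgebroid IM M F A) (C : ContactForm IM M F A n La)
    (ξ : ∀ p : M, A p) : Prop :=
  IsSmoothSec IM M F A ξ ∧ (∀ p : M, C.eta p (ξ p) = 1) ∧
    ∀ (p : M) (w : A p), C.deta p (ξ p) w = 0

/-- `a` is the Hamiltonian section of `f ∈ C^∞(M)` on a contact Lie algebroid with Reeb
section `ξ`: `a` is smooth, `η(a) = 0`, and `dη(a, b) = ρ(b)·f − (ρ(ξ)·f)·η(b)` for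
every `b`. -/
def IsHamiltonianSec (n : ℕ) (La : LieAlgebroid IM M F A)
    (C : ContactForm IM M F A n La) (ξ : ∀ p : M, A p)
    (f : M → ℝ) (a : ∀ p : M, A p) : Prop :=
  IsSmoothSec IM M F A a ∧ (∀ p : M, C.eta p (a p) = 0) ∧
    ∀ (p : M) (w : A p), C.deta p (a p) w =
      dirDeriv IM f p (La.anchor p w) -
        dirDeriv IM f p (La.anchor p (ξ p)) * C.eta p w

/-! Since `ρ(ξ) = 0`, the Hamiltonian condition reduces to `dη(a_f, w) = ρ(w)·f`, so
`{f, g} = ρ(a_g)·f = -ρ(a_f)·g`. Bilinearity and the Leibniz rule are therefore those of the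
derivations `ρ(a)`, and antisymmetry is that of `dη`. For the Jacobi identity, apply `η` to the
Jacobi identity of `[a_f, [a_g, a_h]]`: the defining formula of `dη`, together with `η(a_f) = 0`
and `ρ[a, b] = [ρ a, ρ b]`, turns `η[a_f, [a_g, a_h]]` into second derivatives `ρ(a)ρ(b)·k`,
and in the cyclic sum everything cancels except the Jacobiator of `{·, ·}`. -/

section ContactPoisson

-- Re-declared without the vector-bundle and finite-rank instances of the ambient section,
-- which the lemmas below do not need.
variable {EM : Type*} [NormedAddCommGroup EM] [NormedSpace ℝ EM]
  {HM : Type*} [TopologicalSpace HM] {IM : ModelWithCorners ℝ EM HM}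
  {M : Type*} [TopologicalSpace M] [ChartedSpace HM M] {f g h : M → ℝ} {p : M}

theorem dirDeriv_zero : dirDeriv IM f p 0 = 0 :=
  map_zero _

theorem dirDeriv_const (c : ℝ) (v : TangentSpace IM p) :
    dirDeriv IM (fun _ ↦ c) p v = 0 := by
  rw [dirDeriv, mfderiv_const]
  rfl

theorem dirDeriv_add (hf : MDifferentiableAt IM 𝓘(ℝ) f p)
    (hg : MDifferentiableAt IM 𝓘(ℝ) g p) (v : TangentSpace IM p) :
    dirDeriv IM (fun q ↦ f q + g q) p v = dirDeriv IM f p v + dirDeriv IM g p v :=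
  congrArg (· v) (hf.hasMFDerivAt.add hg.hasMFDerivAt).mfderiv

theorem dirDeriv_const_mul (r : ℝ) (hf : MDifferentiableAt IM 𝓘(ℝ) f p)
    (v : TangentSpace IM p) :
    dirDeriv IM (fun q ↦ r * f q) p v = r * dirDeriv IM f p v :=
  congrArg (· v) (hf.hasMFDerivAt.const_smul r).mfderiv

theorem dirDeriv_mul (hf : MDifferentiableAt IM 𝓘(ℝ) f p)
    (hg : MDifferentiableAt IM 𝓘(ℝ) g p) (v : TangentSpace IM p) :
    dirDeriv IM (fun q ↦ f q * g q) p v = f p * dirDeriv IM g p v + g p * dirDeriv IM f p v :=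
  congrArg (· v) (hf.hasMFDerivAt.mul hg.hasMFDerivAt).mfderiv

theorem IsSmoothF.add (hf : IsSmoothF IM M f) (hg : IsSmoothF IM M g) :
    IsSmoothF IM M (fun q ↦ f q + g q) :=
  ContMDiff.add hf hg

theorem IsSmoothF.const_mul (r : ℝ) (hf : IsSmoothF IM M f) :
    IsSmoothF IM M (fun q ↦ r * f q) :=
  contMDiff_const.mul hf

theorem IsSmoothF.mul (hf : IsSmoothF IM M f) (hg : IsSmoothF IM M g) :
    IsSmoothF IM M (fun q ↦ f q * g q) :=
  ContMDiff.mul hf hg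

theorem IsSmoothF.mdifferentiableAt (hf : IsSmoothF IM M f) (p : M) :
    MDifferentiableAt IM 𝓘(ℝ) f p :=
  (hf p).mdifferentiableAt (by simp)

theorem IsSmoothF.dirDeriv [IsManifold IM (⊤ : ℕ∞) M] (hf : IsSmoothF IM M f)
    {X : ∀ p : M, TangentSpace IM p} (hX : IsSmoothVF IM M X) :
    IsSmoothF IM M (fun p ↦ dirDeriv IM f p (X p)) := by
  have hdf : ContMDiff IM.tangent 𝓘(ℝ).tangent (⊤ : ℕ∞) (tangentMap IM 𝓘(ℝ) f) :=
    hf.contMDiff_tangentMap (by exact_mod_cast le_top)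
  have hsnd : ContMDiff 𝓘(ℝ).tangent 𝓘(ℝ) (⊤ : ℕ∞) (fun w : TangentBundle 𝓘(ℝ) ℝ ↦ w.2) := by
    refine contMDiff_iff.2
      ⟨continuous_snd.comp (tangentBundleModelSpaceHomeomorph 𝓘(ℝ)).continuous, fun _ _ ↦ ?_⟩
    simp only [mfld_simps]
    exact contDiff_snd.contDiffOn
  exact hsnd.comp (hdf.comp hX)

variable [IsManifold IM (⊤ : ℕ∞) M]
  {F : Type*} [NormedAddCommGroup F] [NormedSpace ℝ F]
  {A : M → Type*} [∀ p, AddCommGroup (A p)] [∀ p, Module ℝ (A p)]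
  [∀ p, TopologicalSpace (A p)] [TopologicalSpace (TotalSpace F A)] [FiberBundle F A]

namespace LieAlgebroid

variable (La : LieAlgebroid IM M F A)

def lieDeriv (S : ∀ p, A p) (f : M → ℝ) : M → ℝ :=
  fun p ↦ dirDeriv IM f p (La.anchor p (S p))

theorem lieDeriv_add (S : ∀ p, A p) (hf : IsSmoothF IM M f) (hg : IsSmoothF IM M g) (p : M) :
    La.lieDeriv S (fun q ↦ f q + g q) p = La.lieDeriv S f p + La.lieDeriv S g p :=
  dirDeriv_add (hf.mdifferentiableAt p) (hg.mdifferentiableAt p) _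

theorem lieDeriv_const_mul (S : ∀ p, A p) (r : ℝ) (hf : IsSmoothF IM M f) (p : M) :
    La.lieDeriv S (fun q ↦ r * f q) p = r * La.lieDeriv S f p :=
  dirDeriv_const_mul r (hf.mdifferentiableAt p) _

theorem lieDeriv_mul (S : ∀ p, A p) (hf : IsSmoothF IM M f) (hg : IsSmoothF IM M g) (p : M) :
    La.lieDeriv S (fun q ↦ f q * g q) p = f p * La.lieDeriv S g p + g p * La.lieDeriv S f p :=
  dirDeriv_mul (hf.mdifferentiableAt p) (hg.mdifferentiableAt p) _

theorem isSmoothF_lieDeriv {S : ∀ p, A p} (hS : IsSmoothSec IM M F A S)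
    (hf : IsSmoothF IM M f) : IsSmoothF IM M (La.lieDeriv S f) :=
  hf.dirDeriv (La.anchor_smooth hS)

theorem lieDeriv_bracket {S T : ∀ p, A p} (hS : IsSmoothSec IM M F A S)
    (hT : IsSmoothSec IM M F A T) (hf : IsSmoothF IM M f) (p : M) :
    La.lieDeriv (La.bracket S T) f p =
      La.lieDeriv S (La.lieDeriv T f) p - La.lieDeriv T (La.lieDeriv S f) p :=
  La.anchor_bracket f hS hT hf p

end LieAlgebroid

namespace IsHamiltonianSec

variable {n : ℕ} {La : LieAlgebroid IM M F A} {C : ContactForm IM M F A n La} {ξ : ∀ p, A p}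
  {a b c : ∀ p, A p}

theorem deta_apply (hρξ : ∀ p, La.anchor p (ξ p) = 0)
    (ha : IsHamiltonianSec IM M F A n La C ξ f a) (p : M) (w : A p) :
    C.deta p (a p) w = dirDeriv IM f p (La.anchor p w) := by
  rw [ha.2.2 p w, hρξ p, dirDeriv_zero, zero_mul, sub_zero]

theorem lieDeriv_eq_neg (hρξ : ∀ p, La.anchor p (ξ p) = 0)
    (ha : IsHamiltonianSec IM M F A n La C ξ f a) (hb : IsHamiltonianSec IM M F A n La C ξ g b)
    (p : M) : La.lieDeriv b f p = -La.lieDeriv a g p :=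
  calc La.lieDeriv b f p = C.deta p (a p) (b p) := (ha.deta_apply hρξ p (b p)).symm
    _ = -C.deta p (b p) (a p) := (LinearMap.IsAlt.neg (C.deta_alt p) _ _).symm
    _ = -La.lieDeriv a g p := congrArg Neg.neg (hb.deta_apply hρξ p (a p))

theorem lieDeriv_eta_eq_zero (ha : IsHamiltonianSec IM M F A n La C ξ f a) (S : ∀ p, A p)
    (p : M) : La.lieDeriv S (fun q ↦ C.eta q (a q)) p = 0 := by
  rw [show (fun q ↦ C.eta q (a q)) = fun _ ↦ 0 from funext ha.2.1]
  exact dirDeriv_const 0 _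

theorem eta_bracket (hρξ : ∀ p, La.anchor p (ξ p) = 0)
    (ha : IsHamiltonianSec IM M F A n La C ξ f a) (hb : IsHamiltonianSec IM M F A n La C ξ g b)
    (p : M) : C.eta p (La.bracket a b p) = La.lieDeriv a g p := by
  have hd : C.deta p (a p) (b p) = La.lieDeriv a (fun q ↦ C.eta q (b q)) p -
      La.lieDeriv b (fun q ↦ C.eta q (a q)) p - C.eta p (La.bracket a b p) :=
    C.deta_eq ha.1 hb.1 p
  have hab : C.deta p (a p) (b p) = La.lieDeriv b f p := ha.deta_apply hρξ p (b p)
  rw [hab, hb.lieDeriv_eta_eq_zero, ha.lieDeriv_eta_eq_zero, ha.lieDeriv_eq_neg hρξ hb] at hd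
  linarith

theorem eta_bracket_bracket (hρξ : ∀ p, La.anchor p (ξ p) = 0)
    (ha : IsHamiltonianSec IM M F A n La C ξ f a) (hb : IsHamiltonianSec IM M F A n La C ξ g b)
    (hc : IsHamiltonianSec IM M F A n La C ξ h c) (p : M) :
    C.eta p (La.bracket a (La.bracket b c) p) =
      La.lieDeriv a (La.lieDeriv b h) p - La.lieDeriv (La.bracket b c) f p := by
  have hd : C.deta p (a p) (La.bracket b c p) =
      La.lieDeriv a (fun q ↦ C.eta q (La.bracket b c q)) p -
        La.lieDeriv (La.bracket b c) (fun q ↦ C.eta q (a q)) p -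
        C.eta p (La.bracket a (La.bracket b c) p) :=
    C.deta_eq ha.1 (La.bracket_smooth hb.1 hc.1) p
  have habc : C.deta p (a p) (La.bracket b c p) = La.lieDeriv (La.bracket b c) f p :=
    ha.deta_apply hρξ p _
  rw [habc, funext (hb.eta_bracket hρξ hc), ha.lieDeriv_eta_eq_zero] at hd
  linarith

theorem lieDeriv_lieDeriv_cyclic (hρξ : ∀ p, La.anchor p (ξ p) = 0)
    (ha : IsHamiltonianSec IM M F A n La C ξ f a) (hb : IsHamiltonianSec IM M F A n La C ξ g b)
    (hc : IsHamiltonianSec IM M F A n La C ξ h c) (hf : IsSmoothF IM M f)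
    (hg : IsSmoothF IM M g) (hh : IsSmoothF IM M h) (p : M) :
    La.lieDeriv c (La.lieDeriv b f) p + La.lieDeriv a (La.lieDeriv c g) p +
      La.lieDeriv b (La.lieDeriv a h) p = 0 := by
  have hJ := congrArg (C.eta p) (La.bracket_jacobi ha.1 hb.1 hc.1 p)
  rw [map_add, map_add, map_zero, ha.eta_bracket_bracket hρξ hb hc,
    hb.eta_bracket_bracket hρξ hc ha, hc.eta_bracket_bracket hρξ ha hb,
    La.lieDeriv_bracket hb.1 hc.1 hf, La.lieDeriv_bracket hc.1 ha.1 hg,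
    La.lieDeriv_bracket ha.1 hb.1 hh] at hJ
  linarith

end IsHamiltonianSec

end ContactPoisson

theorem stmt10 (n : ℕ) (La : LieAlgebroid IM M F A) (C : ContactForm IM M F A n La)
    (ξ : ∀ p : M, A p)
    (hρξ : ∀ p : M, La.anchor p (ξ p) = 0)
    (ham : (M → ℝ) → ∀ p : M, A p)
    (hham : ∀ f : M → ℝ, IsSmoothF IM M f → IsHamiltonianSec IM M F A n La C ξ f (ham f))
    (PB : (M → ℝ) → (M → ℝ) → M → ℝ)
    (hPB : ∀ (f g : M → ℝ) (p : M), PB f g p = C.deta p (ham f p) (ham g p)) :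
    -- `ℝ`-bilinearity
    (∀ f₁ f₂ g : M → ℝ, IsSmoothF IM M f₁ → IsSmoothF IM M f₂ → IsSmoothF IM M g →
      ∀ p : M, PB (fun q ↦ f₁ q + f₂ q) g p = PB f₁ g p + PB f₂ g p) ∧
    (∀ (r : ℝ) (f g : M → ℝ), IsSmoothF IM M f → IsSmoothF IM M g →
      ∀ p : M, PB (fun q ↦ r * f q) g p = r * PB f g p) ∧
    (∀ f g₁ g₂ : M → ℝ, IsSmoothF IM M f → IsSmoothF IM M g₁ → IsSmoothF IM M g₂ →
      ∀ p : M, PB f (fun q ↦ g₁ q + g₂ q) p = PB f g₁ p + PB f g₂ p) ∧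
    (∀ (r : ℝ) (f g : M → ℝ), IsSmoothF IM M f → IsSmoothF IM M g →
      ∀ p : M, PB f (fun q ↦ r * g q) p = r * PB f g p) ∧
    -- antisymmetry
    (∀ f g : M → ℝ, IsSmoothF IM M f → IsSmoothF IM M g →
      ∀ p : M, PB f g p = -PB g f p) ∧
    -- Leibniz rule
    (∀ f g h : M → ℝ, IsSmoothF IM M f → IsSmoothF IM M g → IsSmoothF IM M h →
      ∀ p : M, PB (fun q ↦ f q * g q) h p = f p * PB g h p + g p * PB f h p) ∧
    -- Jacobi identity
    (∀ f g h : M → ℝ, IsSmoothF IM M f → IsSmoothF IM M g → IsSmoothF IM M h →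
      ∀ p : M, PB f (PB g h) p + PB g (PB h f) p + PB h (PB f g) p = 0) := by
  have left : ∀ f g, IsSmoothF IM M f → PB f g = La.lieDeriv (ham g) f :=
    fun f g hf ↦ funext fun p ↦ (hPB f g p).trans ((hham f hf).deta_apply hρξ p _)
  have antisymm : ∀ f g p, PB f g p = -PB g f p := fun f g p ↦ by
    rw [hPB, hPB]
    exact (LinearMap.IsAlt.neg (C.deta_alt p) _ _).symm
  have right : ∀ f g, IsSmoothF IM M g → ∀ p, PB f g p = -La.lieDeriv (ham f) g p :=
    fun f g hg p ↦ by rw [antisymm, left g f hg]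
  have hsec : ∀ {f}, IsSmoothF IM M f → IsSmoothSec IM M F A (ham f) := fun hf ↦ (hham _ hf).1
  refine ⟨fun f₁ f₂ g hf₁ hf₂ _ p ↦ ?_, fun r f g hf _ p ↦ ?_, fun f g₁ g₂ _ hg₁ hg₂ p ↦ ?_,
    fun r f g _ hg p ↦ ?_, fun f g _ _ ↦ antisymm f g, fun f g h hf hg _ p ↦ ?_,
    fun f g h hf hg hh p ↦ ?_⟩
  · rw [left _ g (hf₁.add hf₂), left f₁ g hf₁, left f₂ g hf₂, La.lieDeriv_add _ hf₁ hf₂]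
  · rw [left _ g (hf.const_mul r), left f g hf, La.lieDeriv_const_mul _ r hf]
  · rw [right f _ (hg₁.add hg₂), right f g₁ hg₁, right f g₂ hg₂, La.lieDeriv_add _ hg₁ hg₂,
      neg_add]
  · rw [right f _ (hg.const_mul r), right f g hg, La.lieDeriv_const_mul _ r hg, mul_neg]
  · rw [left _ h (hf.mul hg), left g h hg, left f h hf, La.lieDeriv_mul _ hf hg]
  · rw [left g h hg, left h f hh, left f g hf,
      right f _ (La.isSmoothF_lieDeriv (hsec hh) hg),
      right g _ (La.isSmoothF_lieDeriv (hsec hf) hh),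
      right h _ (La.isSmoothF_lieDeriv (hsec hg) hf)]
    linarith [(hham f hf).lieDeriv_lieDeriv_cyclic hρξ (hham g hg) (hham h hh) hf hg hh p]

end LieAlgebroid
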